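/- arXiv:1002.2685 — 2 statements merged into one kernel-verified Lean document; each statement's English description precedes it below -/
import Mathlib

section
/- The grading operator ϑ_{(n+1,n+1)} = (n+1)d + ∑_{i=0}^{n} i(n-i+1) α_{2i}^∨ + ∑_{i=0}^{n} ((2i+1)n - 2i²)/2 · α_{2i+1}^∨ in the affine Lie algebra of type A_{2n+1}^{(1)} satisfies (ϑ | α_{2i}^∨) = 1 and (ϑ | α_{2i+1}^∨) = 0 for all i = 0,...,n, where (·|·) is the normalized invariant form with (α_i^∨|α_j^∨) = a_{i,j} (affine Cartan matrix of type A_{2n+1}^{(1)}, indices mod 2n+2) and (d|α_j^∨) = δ_{0,j}, (d|d)=0. -/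
/-!
The pairing of `ϑ` with `α_k^∨` is `(n+1) δ_{0,k}` plus the cyclic second difference
`2 c_k - c_{k-1} - c_{k+1}` of the coefficients. Read off as functions of the index `j`, the
coefficients are a quadratic polynomial in `j/2` on each parity class, whose second differences
are `1` at even and `0` at odd indices. They vanish at `j = 0` and `j = 2n+2`, so wrapping around
at `k = 2n+1` costs nothing; at `k = 0` the wrap-around term `c_{2n+1} = n/2` differs from the
polynomial's value at `-1`, which is `-(n+2)/2`, by exactly the `n+1` contributed by `d`.
-/

open Matrix

/-- The affine Cartan matrix of type `A_{m-1}^{(1)}` only for `3 ≤ m`: when `m = 2` the two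
off-diagonal conditions coincide and the entries are `-1`, not `-2`. -/
def affineCartanA (m : ℕ) [NeZero m] (R : Type*) [Ring R] : Matrix (Fin m) (Fin m) R :=
  fun i j => if i = j then 2 else if j = i + 1 ∨ i = j + 1 then -1 else 0

section AffineCartanA

variable {m : ℕ} [NeZero m] {R : Type*} [Ring R]

theorem affineCartanA_transpose_apply (hm : 3 ≤ m) (k : Fin m) :
    (affineCartanA m R)ᵀ k = Pi.single k 2 - Pi.single (k - 1) 1 - Pi.single (k + 1) 1 := by
  have h1 : (1 : Fin m) ≠ 0 := by rw [Ne, Fin.one_eq_zero_iff]; omega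
  have h2 : (1 + 1 : Fin m) ≠ 0 := by
    rw [Ne, Fin.ext_iff, Fin.val_add, Fin.val_one', Nat.mod_eq_of_lt (by omega : 1 < m),
      Nat.mod_eq_of_lt (by omega)]
    simp
  have hsub : k - 1 ≠ k := by simpa [sub_eq_self] using h1
  have hadd : k + 1 ≠ k := by simpa using h1
  have hsa : k - 1 ≠ k + 1 := fun h => h2 <|
    calc (1 + 1 : Fin m) = (k + 1) - (k - 1) := by abel
      _ = 0 := by rw [h, sub_self]
  have hpred : ∀ j : Fin m, k = j + 1 ↔ j = k - 1 := fun j => by rw [eq_sub_iff_add_eq, eq_comm]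
  ext j
  simp only [transpose_apply, affineCartanA, Pi.sub_apply, Pi.single_apply, hpred]
  by_cases hj : j = k
  · subst hj; simp [hsub.symm, hadd.symm]
  by_cases hj' : j = k - 1
  · subst hj'; simp [hsub, hsa]
  by_cases hj'' : j = k + 1
  · subst hj''; simp [hadd, hsa.symm]
  simp [hj, hj', hj'']

theorem vecMul_affineCartanA (hm : 3 ≤ m) (c : Fin m → R) (k : Fin m) :
    (c ᵥ* affineCartanA m R) k = 2 * c k - c (k - 1) - c (k + 1) := by
  change c ⬝ᵥ (affineCartanA m R)ᵀ k = _
  simp [affineCartanA_transpose_apply hm, dotProduct_sub, dotProduct_single, mul_two, two_mul]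

end AffineCartanA

/-- `c_j`, the coefficient of `α_j^∨` in `ϑ`. -/
def thetaCoeff (n j : ℕ) : ℚ :=
  if j % 2 = 0 then ((j / 2 : ℕ) : ℚ) * ((n : ℚ) - ((j / 2 : ℕ) : ℚ) + 1)
  else ((2 * ((j / 2 : ℕ) : ℚ) + 1) * (n : ℚ) - 2 * ((j / 2 : ℕ) : ℚ) ^ 2) / 2

section ThetaCoeff

variable (n : ℕ)

@[simp]
theorem thetaCoeff_two_mul (i : ℕ) : thetaCoeff n (2 * i) = i * (n - i + 1) := by
  simp [thetaCoeff]

@[simp]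
theorem thetaCoeff_two_mul_add_one (i : ℕ) :
    thetaCoeff n (2 * i + 1) = ((2 * i + 1) * n - 2 * i ^ 2) / 2 := by
  simp [thetaCoeff, Nat.add_mod, show (2 * i + 1) / 2 = i by omega]

theorem thetaCoeff_two_mul_add_two_self : thetaCoeff n (2 * n + 2) = 0 := by
  rw [show 2 * n + 2 = 2 * (n + 1) by ring, thetaCoeff_two_mul]
  push_cast; ring

theorem two_mul_thetaCoeff_sub_of_even (i : ℕ) :
    2 * thetaCoeff n (2 * i + 2) - thetaCoeff n (2 * i + 1) - thetaCoeff n (2 * i + 3) = 1 := by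
  rw [show 2 * i + 2 = 2 * (i + 1) by ring, show 2 * i + 3 = 2 * (i + 1) + 1 by ring]
  simp only [thetaCoeff_two_mul, thetaCoeff_two_mul_add_one]
  push_cast; ring

theorem two_mul_thetaCoeff_sub_of_odd (i : ℕ) :
    2 * thetaCoeff n (2 * i + 1) - thetaCoeff n (2 * i) - thetaCoeff n (2 * i + 2) = 0 := by
  rw [show 2 * i + 2 = 2 * (i + 1) by ring]
  simp only [thetaCoeff_two_mul, thetaCoeff_two_mul_add_one]
  push_cast; ring

theorem add_two_mul_thetaCoeff_zero_sub :
    (n + 1 : ℚ) + (2 * thetaCoeff n 0 - thetaCoeff n (2 * n + 1) - thetaCoeff n 1) = 1 := by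
  have h0 := thetaCoeff_two_mul n 0
  have h1 := thetaCoeff_two_mul_add_one n 0
  rw [mul_zero] at h0 h1
  rw [h0, h1, thetaCoeff_two_mul_add_one]
  push_cast; ring

theorem thetaCoeff_val_add_one (k : Fin (2 * n + 2)) :
    thetaCoeff n (k + 1 : Fin (2 * n + 2)) = thetaCoeff n (k + 1) := by
  rw [Fin.val_add_one]
  split_ifs with hk
  · rw [hk, Fin.val_last, thetaCoeff_two_mul_add_two_self, ← mul_zero 2, thetaCoeff_two_mul]
    simp
  · rfl

end ThetaCoeff

/-- The grading operator
`ϑ = (n+1) d + ∑_{i=0}^{n} i(n-i+1) α_{2i}^∨ + ∑_{i=0}^{n} ((2i+1)n - 2i²)/2 α_{2i+1}^∨`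
of type `A_{2n+1}^(1)` satisfies `(ϑ | α_{2i}^∨) = 1` and `(ϑ | α_{2i+1}^∨) = 0`,
where `(α_i^∨ | α_j^∨) = a_{i,j}` (affine Cartan matrix, indices mod `2n+2`),
`(d | α_j^∨) = δ_{0,j}` and `(d | d) = 0`; so the pairing of `ϑ` with `α_k^∨`
is `(n+1) δ_{0,k} + ∑_j c_j a_{j,k}` with the stated coefficients `c_j`. -/
theorem stmt_11 (n : ℕ) (hn : 1 ≤ n)
    (a : Fin (2 * n + 2) → Fin (2 * n + 2) → ℚ)
    (ha : ∀ i j, a i j = if i = j then 2 else if j = i + 1 ∨ i = j + 1 then -1 else 0)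
    (c : Fin (2 * n + 2) → ℚ)
    (hc : ∀ j : Fin (2 * n + 2), c j =
      if j.val % 2 = 0 then ((j.val / 2 : ℕ) : ℚ) * ((n : ℚ) - ((j.val / 2 : ℕ) : ℚ) + 1)
      else ((2 * ((j.val / 2 : ℕ) : ℚ) + 1) * (n : ℚ) - 2 * ((j.val / 2 : ℕ) : ℚ) ^ 2) / 2)
    (pairing : Fin (2 * n + 2) → ℚ)
    (hp : ∀ k, pairing k = ((n : ℚ) + 1) * (if k = 0 then 1 else 0) + ∑ j, c j * a j k) :
    ∀ i : Fin (n + 1),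
      pairing ⟨2 * i.val, by omega⟩ = 1 ∧ pairing ⟨2 * i.val + 1, by omega⟩ = 0 := by
  have hpair (k : Fin (2 * n + 2)) : pairing k = ((n : ℚ) + 1) * (if k = 0 then 1 else 0) +
      (2 * thetaCoeff n k - thetaCoeff n (k - 1 : Fin (2 * n + 2)) - thetaCoeff n (k + 1)) := by
    rw [hp, show a = affineCartanA _ ℚ from funext₂ ha,
      show c = fun j : Fin (2 * n + 2) => thetaCoeff n j from funext hc, ← thetaCoeff_val_add_one]
    exact congrArg _ (vecMul_affineCartanA (by omega) _ k)
  have heven (i : ℕ) (hi : i ≤ n) : pairing ⟨2 * i, by omega⟩ = 1 := by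
    rcases i with _ | i
    · rw [hpair, show (⟨2 * 0, _⟩ : Fin (2 * n + 2)) = 0 from rfl, if_pos rfl, Fin.coe_sub_one,
        if_pos rfl, mul_one]
      exact add_two_mul_thetaCoeff_zero_sub n
    · have hk : (⟨2 * (i + 1), by omega⟩ : Fin (2 * n + 2)) ≠ 0 := by simp [Fin.ext_iff]
      rw [hpair, if_neg hk, Fin.val_sub_one_of_ne_zero hk, Fin.val_mk,
        show 2 * (i + 1) - 1 = 2 * i + 1 by omega, show 2 * (i + 1) = 2 * i + 2 by ring]
      simpa using two_mul_thetaCoeff_sub_of_even n i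
  have hodd (i : ℕ) (hi : i ≤ n) : pairing ⟨2 * i + 1, by omega⟩ = 0 := by
    have hk : (⟨2 * i + 1, by omega⟩ : Fin (2 * n + 2)) ≠ 0 := by simp [Fin.ext_iff]
    rw [hpair, if_neg hk, Fin.val_sub_one_of_ne_zero hk]
    simpa using two_mul_thetaCoeff_sub_of_odd n i
  exact fun i => ⟨heven i (by omega), hodd i (by omega)⟩
end

section
/- Given a relation ∑_{i=0}^{n} w_i φ_i = c (a constant), the 2-form identity ∑_{i=0}^{n} dφ_i ∧ dw_i = ∑_{i=0}^{n-1} d(w_n φ_i) ∧ d(w_i/w_n) holds on the locus w_n ≠ 0. -/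
/-!
Write `α ∧ β` for a 2-form evaluated on a pair of vectors. By the product and quotient rules,
`d(w_n φ_i) ∧ d(w_i / w_n) = dφ_i ∧ dw_i + w_n⁻¹ dw_n ∧ d(w_i φ_i)`. Summing over `i < n`, the
constraint turns `∑_{i<n} d(w_i φ_i)` into `-d(w_n φ_n) = -(w_n dφ_n + φ_n dw_n)`, and since
`dw_n ∧ dw_n = 0` the correction term is exactly the missing summand `dφ_n ∧ dw_n`.
-/

open Finset

section Wedge

variable {K M : Type*}

section CommRing

variable [CommRing K] [AddCommGroup M] [Module K M]

def wedge : Module.Dual K M →ₗ[K] Module.Dual K M →ₗ[K] M → M → K :=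
  LinearMap.mk₂ K (fun α β u v => α u * β v - α v * β u)
    (fun _ _ _ => by ext; simp only [LinearMap.add_apply, Pi.add_apply]; ring)
    (fun _ _ _ => by ext; simp only [LinearMap.smul_apply, Pi.smul_apply, smul_eq_mul]; ring)
    (fun _ _ _ => by ext; simp only [LinearMap.add_apply, Pi.add_apply]; ring)
    (fun _ _ _ => by ext; simp only [LinearMap.smul_apply, Pi.smul_apply, smul_eq_mul]; ring)

@[simp]
theorem wedge_apply (α β : Module.Dual K M) (u v : M) :
    wedge α β u v = α u * β v - α v * β u :=
  rfl

@[simp]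
theorem wedge_self (α : Module.Dual K M) : wedge α α = 0 := by
  ext; simp [mul_comm]

theorem wedge_swap (α β : Module.Dual K M) : wedge β α = -wedge α β := by
  ext; simp [mul_comm]

end CommRing

variable [Field K] [AddCommGroup M] [Module K M]

/-- With `a = φ`, `b = w_n`, `c = w` and `α = dφ`, `β = dw`, `γ = dw_n`, this is
`d(w_n φ) ∧ d(w / w_n) = dφ ∧ dw + w_n⁻¹ dw_n ∧ d(w φ)`. -/
theorem wedge_mul_div (a b c : K) (α β γ : Module.Dual K M) (hb : b ≠ 0) :
    wedge (b • α + a • γ) (b⁻¹ • β - (c / b ^ 2) • γ)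
      = wedge α β + b⁻¹ • wedge γ (c • α + a • β) := by
  ext u v
  simp only [wedge_apply, LinearMap.add_apply, LinearMap.sub_apply, LinearMap.smul_apply,
    Pi.add_apply, Pi.smul_apply, smul_eq_mul]
  field_simp
  ring

theorem sum_wedge_eq_sum_wedge_mul_div {n : ℕ} (w φ : Fin (n + 1) → K)
    (dw dφ : Fin (n + 1) → Module.Dual K M)
    (hsum : ∑ i, (w i • dφ i + φ i • dw i) = 0) (hN : w (Fin.last n) ≠ 0) :
    ∑ i, wedge (dφ i) (dw i)
      = ∑ i : Fin n, wedge (w (Fin.last n) • dφ i.castSucc + φ i.castSucc • dw (Fin.last n))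
          ((w (Fin.last n))⁻¹ • dw i.castSucc
            - (w i.castSucc / w (Fin.last n) ^ 2) • dw (Fin.last n)) := by
  rw [Fin.sum_univ_castSucc] at hsum ⊢
  simp_rw [wedge_mul_div _ _ _ _ _ _ hN, sum_add_distrib, ← smul_sum, ← map_sum,
    eq_neg_of_add_eq_zero_left hsum]
  simp [wedge_swap (dφ (Fin.last n)), smul_smul, hN]

end Wedge

section Calculus

variable {𝕜 E : Type*} [NontriviallyNormedField 𝕜] [NormedAddCommGroup E] [NormedSpace 𝕜 E]

theorem fderiv_fun_div {f g : E → 𝕜} {x : E} (hf : DifferentiableAt 𝕜 f x)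
    (hg : DifferentiableAt 𝕜 g x) (hx : g x ≠ 0) :
    fderiv 𝕜 (fun y => f y / g y) x
      = (g x)⁻¹ • fderiv 𝕜 f x - (f x / g x ^ 2) • fderiv 𝕜 g x := by
  have hinv : HasFDerivAt (fun y => (g y)⁻¹) _ x :=
    (hasDerivAt_inv hx).comp_hasFDerivAt x hg.hasFDerivAt
  simp_rw [div_eq_mul_inv]
  rw [(hf.hasFDerivAt.fun_mul hinv).fderiv]
  ext; simp; ring

theorem sum_smul_fderiv_add_smul_fderiv_eq_zero {ι : Type*} [Fintype ι] {w φ : ι → E → 𝕜} {c : 𝕜}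
    {x : E} (hw : ∀ i, DifferentiableAt 𝕜 (w i) x) (hφ : ∀ i, DifferentiableAt 𝕜 (φ i) x)
    (hc : ∀ y, ∑ i, w i y * φ i y = c) :
    ∑ i, (w i x • fderiv 𝕜 (φ i) x + φ i x • fderiv 𝕜 (w i) x) = 0 := by
  calc _ = fderiv 𝕜 (fun y => ∑ i, w i y * φ i y) x := by
        rw [fderiv_fun_sum fun i _ => (hw i).fun_mul (hφ i)]
        exact sum_congr rfl fun i _ => (fderiv_fun_mul (hw i) (hφ i)).symm
    _ = 0 := by simp_rw [hc]; exact fderiv_const_apply c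

end Calculus

/-- Given smooth functions `w_0,…,w_n, φ_0,…,φ_n` constrained by
`∑ w_i φ_i = c` (a constant), the 2-form identity
`∑_{i=0}^{n} dφ_i ∧ dw_i = ∑_{i=0}^{n-1} d(w_n φ_i) ∧ d(w_i / w_n)`
holds at every point where `w_n ≠ 0`; here a 2-form `df ∧ dg` is evaluated on
tangent vectors `u, v` as `df(u) dg(v) - df(v) dg(u)`. -/
theorem stmt_15 {E : Type*} [NormedAddCommGroup E] [NormedSpace ℝ E]
    (n : ℕ) (w φ : Fin (n + 1) → E → ℝ) (c : ℝ)
    (hw : ∀ i, Differentiable ℝ (w i)) (hφ : ∀ i, Differentiable ℝ (φ i))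
    (hc : ∀ x, ∑ i, w i x * φ i x = c)
    (x : E) (hx : w (Fin.last n) x ≠ 0) (u v : E) :
    ∑ i, (fderiv ℝ (φ i) x u * fderiv ℝ (w i) x v
        - fderiv ℝ (φ i) x v * fderiv ℝ (w i) x u)
      = ∑ i : Fin n,
        (fderiv ℝ (fun y => w (Fin.last n) y * φ i.castSucc y) x u
            * fderiv ℝ (fun y => w i.castSucc y / w (Fin.last n) y) x v
          - fderiv ℝ (fun y => w (Fin.last n) y * φ i.castSucc y) x v
            * fderiv ℝ (fun y => w i.castSucc y / w (Fin.last n) y) x u) := by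
  have hsum : ∑ i, (w i x • (fderiv ℝ (φ i) x : Module.Dual ℝ E)
      + φ i x • (fderiv ℝ (w i) x : Module.Dual ℝ E)) = 0 := by
    exact_mod_cast congrArg ContinuousLinearMap.toLinearMap
      (sum_smul_fderiv_add_smul_fderiv_eq_zero (fun i => hw i x) (fun i => hφ i x) hc)
  have key := congrFun₂ (sum_wedge_eq_sum_wedge_mul_div _ _ _ _ hsum hx) u v
  simp only [fderiv_fun_mul (hw _ x) (hφ _ x), fderiv_fun_div (hw _ x) (hw _ x) hx]
  simpa only [Finset.sum_apply, wedge_apply, LinearMap.add_apply, LinearMap.sub_apply,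
    LinearMap.smul_apply, ContinuousLinearMap.coe_coe, FunLike.coe_add, FunLike.coe_sub,
    FunLike.coe_smul, Pi.add_apply, Pi.sub_apply, Pi.smul_apply,
    smul_eq_mul] using key
end
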